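/- arXiv:1201.2824 — 2 statements merged into one kernel-verified Lean document; each statement's English description precedes it below -/
import Mathlib

section
/- Let Γ₁, …, Γₙ be countable groups and Γ = Γ₁ × ⋯ × Γₙ. For each i, let 𝒢ᵢ be a family of subgroups of Γᵢ and suppose there exists a map μᵢ : Γᵢ → Prob(Γᵢ) satisfying lim_{k → ∞/𝒢ᵢ} ‖μᵢ(gkh) − g·μᵢ(k)‖₁ = 0 for all g, h ∈ Γᵢ. Then the map μ : Γ → Prob(Γ), μ(g₁,…,gₙ) = μ₁(g₁) × ⋯ × μₙ(gₙ), satisfies lim_{k → ∞/𝒢} ‖μ(gkh) − g·μ(k)‖₁ = 0 for all g, h ∈ Γ, where 𝒢 = ⋃ᵢ { Λ × ∏_{j≠i} Γⱼ : Λ ∈ 𝒢ᵢ }. -/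
/-!
Write `aᵢ = μᵢ(gᵢkᵢhᵢ)` and `bᵢ = gᵢ·μᵢ(kᵢ)`. Telescoping `∏ aᵢ - ∏ bᵢ` and summing the `i`-th
term over the product group, where every factor other than `|aᵢ - bᵢ|` is a probability vector,
gives `‖⊗ aᵢ - ⊗ bᵢ‖₁ ≤ ∑ᵢ ‖aᵢ - bᵢ‖₁`. The `i`-th summand depends on `kᵢ` only, and it tends to
`0` as `k → ∞/𝒢` because the preimage of `gΣh ⊆ Γᵢ` under the `i`-th coordinate is
`ĝ (Σ × ∏_{j≠i} Γⱼ) ĥ` with `ĝ, ĥ` supported in coordinate `i`. Since small sets are closed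
under finite unions, `k → ∞/𝒢` is a filter, and the theorem is a squeeze.
-/

/-- A subset `F ⊆ G` is small relative to a family `𝒢` of subgroups of `G` if it is contained
in a finite union of sets of the form `g Σ h` with `g, h ∈ G` and `Σ ∈ 𝒢`. -/
def SmallRel {G : Type*} [Group G] (𝒢 : Set (Subgroup G)) (F : Set G) : Prop :=
  ∃ (n : ℕ) (g h : Fin n → G) (S : Fin n → Subgroup G),
    (∀ i, S i ∈ 𝒢) ∧ F ⊆ ⋃ i, (fun x => g i * x * h i) '' (S i : Set G)

open Filter Topology Finset
open scoped ENNReal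

section SmallSets

variable {G : Type*} [Group G] {𝒢 : Set (Subgroup G)} {s t : Set G}

theorem SmallRel.empty : SmallRel 𝒢 ∅ :=
  ⟨0, finZeroElim, finZeroElim, finZeroElim, finZeroElim, Set.empty_subset _⟩

theorem SmallRel.mono (ht : SmallRel 𝒢 t) (hst : s ⊆ t) : SmallRel 𝒢 s :=
  let ⟨m, g, h, S, hS, ht⟩ := ht
  ⟨m, g, h, S, hS, hst.trans ht⟩

theorem SmallRel.union (hs : SmallRel 𝒢 s) (ht : SmallRel 𝒢 t) : SmallRel 𝒢 (s ∪ t) := by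
  obtain ⟨m, g, h, S, hS, hs⟩ := hs
  obtain ⟨m', g', h', S', hS', ht⟩ := ht
  refine ⟨m + m', Fin.append g g', Fin.append h h', Fin.append S S',
    Fin.addCases (by simpa using hS) (by simpa using hS'), Set.union_subset ?_ ?_⟩
  · intro x hx
    obtain ⟨i, hi⟩ := Set.mem_iUnion.1 (hs hx)
    exact Set.mem_iUnion.2 ⟨Fin.castAdd m' i, by simpa using hi⟩
  · intro x hx
    obtain ⟨i, hi⟩ := Set.mem_iUnion.1 (ht hx)
    exact Set.mem_iUnion.2 ⟨Fin.natAdd m i, by simpa using hi⟩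

-- `Tendsto f (coSmallRel 𝒢) (𝓝 0)` is the paper's `lim_{k → ∞/𝒢} f(k) = 0`.
def coSmallRel (𝒢 : Set (Subgroup G)) : Filter G :=
  comk (SmallRel 𝒢) SmallRel.empty (fun _ ht _ hst => ht.mono hst) (fun _ hs _ ht => hs.union ht)

theorem tendsto_coSmallRel_nhds_zero_iff {f : G → ℝ} (hf : ∀ k, 0 ≤ f k) :
    Tendsto f (coSmallRel 𝒢) (𝓝 0) ↔ ∀ ε > 0, SmallRel 𝒢 {k | ε < f k} := by
  constructor
  · intro hlim ε hε
    have hsmall : {k | f k < ε} ∈ coSmallRel 𝒢 := hlim (gt_mem_nhds hε)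
    exact SmallRel.mono hsmall fun k (hk : ε < f k) (hlt : f k < ε) => lt_asymm hk hlt
  · intro hsmall
    refine tendsto_order.2 ⟨fun ε hε => Eventually.of_forall fun k => hε.trans_le (hf k),
      fun ε hε => (hsmall _ (half_pos hε)).mono fun k (hk : ¬f k < ε) => ?_⟩
    exact (half_lt_self hε).trans_le (not_lt.1 hk)

end SmallSets

section Pi

variable {ι : Type*} [DecidableEq ι] {Γ : ι → Type*} [∀ i, Group (Γ i)]

theorem Subgroup.mem_pi_update_top {x : ∀ i, Γ i} {i : ι} {Λ : Subgroup (Γ i)} :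
    x ∈ Subgroup.pi Set.univ (Function.update (fun j => (⊤ : Subgroup (Γ j))) i Λ) ↔ x i ∈ Λ := by
  rw [Subgroup.mem_pi]
  refine ⟨fun hx => by simpa using hx i (Set.mem_univ i), fun hx j _ => ?_⟩
  rcases eq_or_ne j i with rfl | hji
  · simpa using hx
  · simp [Function.update_of_ne hji]

def piSubgroupFamily (𝒢 : ∀ i, Set (Subgroup (Γ i))) : Set (Subgroup (∀ i, Γ i)) :=
  {H | ∃ i Λ, Λ ∈ 𝒢 i ∧
    H = Subgroup.pi Set.univ (Function.update (fun j => (⊤ : Subgroup (Γ j))) i Λ)}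

theorem SmallRel.preimage_eval {𝒢 : ∀ i, Set (Subgroup (Γ i))} {i : ι} {F : Set (Γ i)}
    (hF : SmallRel (𝒢 i) F) : SmallRel (piSubgroupFamily 𝒢) ((fun k => k i) ⁻¹' F) := by
  obtain ⟨m, g, h, S, hS, hF⟩ := hF
  refine ⟨m, fun t => Pi.mulSingle i (g t), fun t => Pi.mulSingle i (h t),
    fun t => Subgroup.pi Set.univ (Function.update (fun j => ⊤) i (S t)),
    fun t => ⟨i, S t, hS t, rfl⟩, fun k hk => ?_⟩
  obtain ⟨t, σ, hσ, hkσ⟩ := Set.mem_iUnion.1 (hF hk)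
  refine Set.mem_iUnion.2 ⟨t, (Pi.mulSingle i (g t))⁻¹ * k * (Pi.mulSingle i (h t))⁻¹, ?_, by group⟩
  rw [SetLike.mem_coe, Subgroup.mem_pi_update_top]
  simpa [← hkσ, mul_assoc] using hσ

theorem tendsto_eval_coSmallRel (𝒢 : ∀ i, Set (Subgroup (Γ i))) (i : ι) :
    Tendsto (fun k : ∀ j, Γ j => k i) (coSmallRel (piSubgroupFamily 𝒢)) (coSmallRel (𝒢 i)) :=
  fun _ hs => SmallRel.preimage_eval hs

end Pi

theorem abs_prod_sub_prod_le_sum {ι R : Type*} [LinearOrder ι] [CommRing R] [LinearOrder R]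
    [IsStrictOrderedRing R] (s : Finset ι) {a b : ι → R} (ha : ∀ i ∈ s, 0 ≤ a i)
    (hb : ∀ i ∈ s, 0 ≤ b i) :
    |∏ i ∈ s, a i - ∏ i ∈ s, b i| ≤
      ∑ i ∈ s, (∏ j ∈ s with j < i, a j) * |a i - b i| * ∏ j ∈ s with i < j, b j := by
  have htelescope := prod_add_ordered s b (a - b)
  simp only [Pi.sub_apply, add_sub_cancel] at htelescope
  rw [htelescope, add_sub_cancel_left]
  refine (abs_sum_le_sum_abs _ _).trans (sum_le_sum fun i _ => ?_)
  rw [abs_mul, abs_mul, abs_of_nonneg (prod_nonneg fun j hj => ha j (mem_filter.1 hj).1),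
    abs_of_nonneg (prod_nonneg fun j hj => hb j (mem_filter.1 hj).1), mul_comm |a i - b i|]

theorem ENNReal.tsum_pi_prod_eq_prod_tsum {n : ℕ} {Γ : Fin n → Type*} (f : ∀ i, Γ i → ℝ≥0∞) :
    ∑' s : ∀ i, Γ i, ∏ i, f i (s i) = ∏ i, ∑' t, f i t := by
  induction n with
  | zero => simp
  | succ m ih =>
    rw [← (Fin.consEquiv Γ).tsum_eq, ENNReal.tsum_prod']
    simp only [Fin.consEquiv_apply, Fin.prod_univ_succ, Fin.cons_zero, Fin.cons_succ,
      ENNReal.tsum_mul_left, ih fun i => f i.succ, ENNReal.tsum_mul_right]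

section ProductMeasures

variable {n : ℕ} {Γ : Fin n → Type*}

-- The `j`-th factor of the `i`-th term `(∏_{j<i} aⱼ) |aᵢ - bᵢ| (∏_{j>i} bⱼ)` of the
-- telescoping bound for `|∏ aⱼ - ∏ bⱼ|`.
def telescopeFactor (a b : ∀ i, Γ i → ℝ) (i j : Fin n) : Γ j → ℝ :=
  Function.update (fun j => if j < i then a j else b j) i (fun t => |a i t - b i t|) j

theorem prod_telescopeFactor (a b : ∀ i, Γ i → ℝ) (i : Fin n) (s : ∀ j, Γ j) :
    ∏ j, telescopeFactor a b i j (s j) =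
      (∏ j with j < i, a j (s j)) * |a i (s i) - b i (s i)| * ∏ j with i < j, b j (s j) := by
  rw [← mul_prod_erase univ _ (mem_univ i)]
  simp only [telescopeFactor, Function.update_self]
  rw [prod_congr rfl fun j hj => by rw [Function.update_of_ne (ne_of_mem_erase hj)]]
  simp only [ite_apply]
  rw [prod_ite, mul_comm, mul_right_comm]
  have hlt : (univ.erase i).filter (· < i) = univ.filter (· < i) := by ext j; simp; omega
  have hgt : (univ.erase i).filter (¬· < i) = univ.filter (i < ·) := by ext j; simp; omega
  rw [hlt, hgt]

theorem telescopeFactor_nonneg {a b : ∀ i, Γ i → ℝ} (ha : ∀ i t, 0 ≤ a i t)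
    (hb : ∀ i t, 0 ≤ b i t) (i j : Fin n) (t : Γ j) : 0 ≤ telescopeFactor a b i j t := by
  rcases eq_or_ne j i with rfl | hji
  · simp [telescopeFactor]
  · simp only [telescopeFactor, Function.update_of_ne hji]
    split_ifs
    exacts [ha j t, hb j t]

theorem ENNReal.tsum_ofReal_eq_one {α : Type*} {f : α → ℝ} (hf₀ : ∀ t, 0 ≤ f t)
    (hf : HasSum f 1) : ∑' t, ENNReal.ofReal (f t) = 1 := by
  rw [← ENNReal.ofReal_tsum_of_nonneg hf₀ hf.summable, hf.tsum_eq, ENNReal.ofReal_one]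

theorem tsum_ofReal_prod_telescopeFactor {a b : ∀ i, Γ i → ℝ} (ha₀ : ∀ i t, 0 ≤ a i t)
    (hb₀ : ∀ i t, 0 ≤ b i t) (ha : ∀ i, HasSum (a i) 1) (hb : ∀ i, HasSum (b i) 1) (i : Fin n) :
    ∑' s : ∀ j, Γ j, ENNReal.ofReal (∏ j, telescopeFactor a b i j (s j)) =
      ENNReal.ofReal (∑' t, |a i t - b i t|) := by
  have hfactor_nonneg := telescopeFactor_nonneg ha₀ hb₀ i
  simp only [ENNReal.ofReal_prod_of_nonneg fun j _ => hfactor_nonneg j _]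
  rw [ENNReal.tsum_pi_prod_eq_prod_tsum fun j t => ENNReal.ofReal (telescopeFactor a b i j t),
    prod_eq_single i]
  · simp only [telescopeFactor, Function.update_self]
    exact (ENNReal.ofReal_tsum_of_nonneg (fun t => abs_nonneg _)
      ((ha i).summable.sub (hb i).summable).abs).symm
  · intro j _ hji
    simp only [telescopeFactor, Function.update_of_ne hji]
    split_ifs
    exacts [ENNReal.tsum_ofReal_eq_one (ha₀ j) (ha j), ENNReal.tsum_ofReal_eq_one (hb₀ j) (hb j)]
  · exact fun h => (h (mem_univ i)).elim

theorem tsum_abs_prod_sub_prod_le {a b : ∀ i, Γ i → ℝ} (ha₀ : ∀ i t, 0 ≤ a i t)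
    (hb₀ : ∀ i t, 0 ≤ b i t) (ha : ∀ i, HasSum (a i) 1) (hb : ∀ i, HasSum (b i) 1) :
    ∑' s : ∀ i, Γ i, |∏ i, a i (s i) - ∏ i, b i (s i)| ≤ ∑ i, ∑' t, |a i t - b i t| := by
  have hpointwise (s : ∀ i, Γ i) :
      |∏ i, a i (s i) - ∏ i, b i (s i)| ≤ ∑ i, ∏ j, telescopeFactor a b i j (s j) := by
    simpa only [prod_telescopeFactor] using
      abs_prod_sub_prod_le_sum univ (fun i _ => ha₀ i (s i)) (fun i _ => hb₀ i (s i))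
  have hterm_nonneg (i : Fin n) (s : ∀ j, Γ j) : 0 ≤ ∏ j, telescopeFactor a b i j (s j) :=
    prod_nonneg fun j _ => telescopeFactor_nonneg ha₀ hb₀ i j _
  have hnorm_nonneg (i : Fin n) : 0 ≤ ∑' t, |a i t - b i t| := tsum_nonneg fun _ => abs_nonneg _
  calc ∑' s : ∀ i, Γ i, |∏ i, a i (s i) - ∏ i, b i (s i)|
      = (∑' s : ∀ i, Γ i, ENNReal.ofReal |∏ i, a i (s i) - ∏ i, b i (s i)|).toReal := by
        rw [ENNReal.tsum_toReal_eq fun _ => ENNReal.ofReal_ne_top]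
        simp only [ENNReal.toReal_ofReal (abs_nonneg _)]
    _ ≤ ∑ i, ∑' t, |a i t - b i t| := by
      refine ENNReal.toReal_le_of_le_ofReal (sum_nonneg fun i _ => hnorm_nonneg i) ?_
      calc ∑' s : ∀ i, Γ i, ENNReal.ofReal |∏ i, a i (s i) - ∏ i, b i (s i)|
          ≤ ∑' s : ∀ i, Γ i, ∑ i, ENNReal.ofReal (∏ j, telescopeFactor a b i j (s j)) :=
            ENNReal.tsum_le_tsum fun s => (ENNReal.ofReal_le_ofReal (hpointwise s)).trans_eq
              (ENNReal.ofReal_sum_of_nonneg fun i _ => hterm_nonneg i s)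
        _ = ∑ i, ENNReal.ofReal (∑' t, |a i t - b i t|) := by
            rw [Summable.tsum_finsetSum fun i _ => ENNReal.summable]
            exact sum_congr rfl fun i _ => tsum_ofReal_prod_telescopeFactor ha₀ hb₀ ha hb i
        _ = ENNReal.ofReal (∑ i, ∑' t, |a i t - b i t|) :=
            (ENNReal.ofReal_sum_of_nonneg fun i _ => hnorm_nonneg i).symm

end ProductMeasures

theorem product_biexactness_map_general {n : ℕ} (Γ : Fin n → Type*) [∀ i, Group (Γ i)]
    (𝒢 : ∀ i, Set (Subgroup (Γ i)))
    (μ : ∀ i, Γ i → Γ i → ℝ)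
    (hprob : ∀ i k, (∀ s, 0 ≤ μ i k s) ∧ Summable (μ i k) ∧ ∑' s, μ i k s = 1)
    (hconv : ∀ i (g h : Γ i), ∀ ε > (0 : ℝ),
      SmallRel (𝒢 i) {k | ε < ∑' s, |μ i (g * k * h) s - μ i k (g⁻¹ * s)|}) :
    ∀ g h : (∀ i, Γ i), ∀ ε > (0 : ℝ),
      SmallRel
        {H : Subgroup (∀ i, Γ i) | ∃ i Λ, Λ ∈ 𝒢 i ∧
          H = Subgroup.pi Set.univ
                (Function.update (fun j => (⊤ : Subgroup (Γ j))) i Λ)}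
        {k | ε < ∑' s : (∀ i, Γ i),
          |(∏ i, μ i ((g * k * h) i) (s i)) - ∏ i, μ i (k i) ((g⁻¹ * s) i)|} := by
  intro g h
  have hsum (i : Fin n) (k : Γ i) : HasSum (μ i k) 1 := (hprob i k).2.2 ▸ (hprob i k).2.1.hasSum
  have hfactor (i : Fin n) : Tendsto
      (fun k : ∀ j, Γ j => ∑' t, |μ i (g i * k i * h i) t - μ i (k i) ((g i)⁻¹ * t)|)
      (coSmallRel (piSubgroupFamily 𝒢)) (𝓝 0) :=
    ((tendsto_coSmallRel_nhds_zero_iff fun _ => tsum_nonneg fun _ => abs_nonneg _).2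
      (hconv i (g i) (h i))).comp (tendsto_eval_coSmallRel 𝒢 i)
  refine (tendsto_coSmallRel_nhds_zero_iff (𝒢 := piSubgroupFamily 𝒢)
    fun _ => tsum_nonneg fun _ => abs_nonneg _).1 ?_
  refine squeeze_zero (fun _ => tsum_nonneg fun _ => abs_nonneg _) (fun k => ?_)
    (by simpa using tendsto_finsetSum univ fun i _ => hfactor i)
  exact tsum_abs_prod_sub_prod_le (fun i => (hprob i _).1) (fun i t => (hprob i _).1 _)
    (fun i => hsum i _) (fun i => (Equiv.mulLeft (g i)⁻¹).hasSum_iff.2 (hsum i (k i)))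

/-- If each `μᵢ : Γᵢ → Prob(Γᵢ)` satisfies `lim_{k → ∞/𝒢ᵢ} ‖μᵢ(gkh) - g·μᵢ(k)‖₁ = 0`
for all `g, h ∈ Γᵢ`, then the product map `μ(g₁,…,gₙ) = μ₁(g₁) × ⋯ × μₙ(gₙ)` satisfies the
analogous condition on `Γ = Γ₁ × ⋯ × Γₙ` relative to `𝒢 = ⋃ᵢ {Λ × ∏_{j≠i} Γⱼ : Λ ∈ 𝒢ᵢ}`. -/
theorem product_biexactness_map {n : ℕ} (Γ : Fin n → Type*) [∀ i, Group (Γ i)]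
    [∀ i, Countable (Γ i)]
    (𝒢 : ∀ i, Set (Subgroup (Γ i)))
    (μ : ∀ i, Γ i → Γ i → ℝ)
    (hprob : ∀ i k, (∀ s, 0 ≤ μ i k s) ∧ Summable (μ i k) ∧ ∑' s, μ i k s = 1)
    (hconv : ∀ i (g h : Γ i), ∀ ε > (0 : ℝ),
      SmallRel (𝒢 i) {k | ε < ∑' s, |μ i (g * k * h) s - μ i k (g⁻¹ * s)|}) :
    ∀ g h : (∀ i, Γ i), ∀ ε > (0 : ℝ),
      SmallRel
        {H : Subgroup (∀ i, Γ i) | ∃ i Λ, Λ ∈ 𝒢 i ∧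
          H = Subgroup.pi Set.univ
                (Function.update (fun j => (⊤ : Subgroup (Γ j))) i Λ)}
        {k | ε < ∑' s : (∀ i, Γ i),
          |(∏ i, μ i ((g * k * h) i) (s i)) - ∏ i, μ i (k i) ((g⁻¹ * s) i)|} :=
  product_biexactness_map_general Γ 𝒢 μ hprob hconv
end

section
/- Let Γ be a countable group, ζ : Γ → ℓ²_ℝ(Γ) with ‖ζ(k)‖₂ = 1 for all k, and {e} = E₀ ⊂ E₁ ⊂ E₂ ⊂ ⋯ finite symmetric (Eₙ⁻¹ = Eₙ) subsets with ⋃ₙ Eₙ = Γ. Define F₀ = {e} and inductively Fₙ = EₙFₙ₋₁Eₙ ∪ ⋃_{g,h∈Eₙ} {k : ‖ζ(gkh) − λ_g ζ(k)‖₂ > 1/n}. Assume each set {k : ‖ζ(gkh) − λ_g ζ(k)‖₂ > 1/n} with g,h ∈ Eₙ has the property of being small relative to a family 𝒢 of subgroups of Γ (closed so that smallness is preserved under finite unions and translations). Define c : Γ → ℓ²_ℝ(Γ) by c(k) = 0 if k ∈ F₁ and c(k) = n ζ(k) if k ∈ F_{n+1} ∖ Fₙ for n ≥ 1. Then for all g,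 h ∈ Γ and any m ≥ 1 with g, h ∈ E_m, one has ‖c(gkh) − λ_g c(k)‖₂ ≤ 2m for all k ∈ Γ. -/
open scoped ENNReal

private lemma summable_of_tsum_sq {ι : Type*} {f : ι → ℝ} (h : ∑' s, f s ^ 2 = 1) :
    Summable (fun s => f s ^ 2) := by
  by_contra hs
  rw [tsum_eq_zero_of_not_summable hs] at h
  norm_num at h

private lemma memℓp_of_summable_sq {ι : Type*} {f : ι → ℝ}
    (hf : Summable (fun s => f s ^ 2)) : Memℓp f 2 := by
  apply memℓp_gen
  have : (fun i => ‖f i‖ ^ (2 : ℝ≥0∞).toReal) = fun i => f i ^ 2 := by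
    funext i
    rw [ENNReal.toReal_ofNat]
    rw [show ((2:ℝ)) = ((2:ℕ):ℝ) by norm_num, Real.rpow_natCast]
    simp [sq_abs]
  rw [this]; exact hf

private lemma sqrt_tsum_sq_eq_norm {ι : Type*} (F : lp (fun _ : ι => ℝ) 2) :
    Real.sqrt (∑' s, (F s) ^ 2) = ‖F‖ := by
  rw [lp.norm_eq_tsum_rpow (by norm_num) F, Real.sqrt_eq_rpow]
  congr 1
  · apply tsum_congr
    intro i
    rw [ENNReal.toReal_ofNat, show ((2:ℝ)) = ((2:ℕ):ℝ) by norm_num, Real.rpow_natCast]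
    simp [sq_abs]

set_option maxHeartbeats 1000000
/-- With `ζ : Γ → ℓ²_ℝ(Γ)` unit vectors, an exhausting symmetric sequence `Eₙ` of finite sets,
the inductively defined sets `Fₙ`, and `c` defined by `c(k) = n ζ(k)` on `F_{n+1} ∖ Fₙ`
(and `c = 0` on `F₁`), one gets `‖c(gkh) - λ_g c(k)‖₂ ≤ 2m` for all `k` whenever
`g, h ∈ E_m`, `m ≥ 1`. -/
theorem quasi_cocycle_bound {Γ : Type*} [Group Γ] [Countable Γ]
    (𝒢 : Set (Subgroup Γ))
    (ζ : Γ → Γ → ℝ) (hζ : ∀ k, ∑' s, (ζ k s) ^ 2 = 1)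
    (E : ℕ → Finset Γ) (hE0 : E 0 = {1}) (hEmono : ∀ n, E n ⊆ E (n + 1))
    (hEsym : ∀ n, ∀ g ∈ E n, g⁻¹ ∈ E n) (hEcover : ∀ g : Γ, ∃ n, g ∈ E n)
    (F : ℕ → Set Γ) (hF0 : F 0 = {1})
    (hFn : ∀ n : ℕ, 1 ≤ n →
      F n = {x | ∃ a ∈ E n, ∃ y ∈ F (n - 1), ∃ b ∈ E n, x = a * y * b} ∪
        ⋃ g ∈ E n, ⋃ h ∈ E n,
          {k | 1 / (n : ℝ) <
            Real.sqrt (∑' s, (ζ (g * k * h) s - ζ k (g⁻¹ * s)) ^ 2)})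
    (hsmall : ∀ n : ℕ, 1 ≤ n → ∀ g ∈ E n, ∀ h ∈ E n,
      SmallRel 𝒢 {k | 1 / (n : ℝ) <
        Real.sqrt (∑' s, (ζ (g * k * h) s - ζ k (g⁻¹ * s)) ^ 2)})
    (c : Γ → Γ → ℝ)
    (hc0 : ∀ k ∈ F 1, c k = 0)
    (hcn : ∀ n : ℕ, 1 ≤ n → ∀ k ∈ F (n + 1) \ F n, c k = fun s => (n : ℝ) * ζ k s) :
    ∀ g h : Γ, ∀ m : ℕ, 1 ≤ m → g ∈ E m → h ∈ E m → ∀ k : Γ,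
      Real.sqrt (∑' s, (c (g * k * h) s - c k (g⁻¹ * s)) ^ 2) ≤ 2 * (m : ℝ) := by
  classical
  -- basic facts about E
  have hone : ∀ n, (1 : Γ) ∈ E n := by
    intro n; induction n with
    | zero => simp [hE0]
    | succ n ih => exact hEmono n ih
  have hEmono' : ∀ {p q : ℕ}, p ≤ q → E p ⊆ E q := by
    intro p q h
    induction h with
    | refl => exact subset_rfl
    | step _ ih => exact ih.trans (hEmono _)
  -- F is monotone
  have hFmono1 : ∀ n, F n ⊆ F (n + 1) := by
    intro n x hx
    rw [hFn (n + 1) (by omega)]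
    left
    exact ⟨1, hone _, x, by simpa using hx, 1, hone _, by simp⟩
  have hFmono : ∀ {p q : ℕ}, p ≤ q → F p ⊆ F q := by
    intro p q h
    induction h with
    | refl => exact subset_rfl
    | step _ ih => exact ih.trans (hFmono1 _)
  have h1F : ∀ n, (1 : Γ) ∈ F n := fun n => hFmono (Nat.zero_le n) (by simp [hF0])
  -- products
  have hprod : ∀ (g h : Γ) (n : ℕ), g ∈ E (n + 1) → h ∈ E (n + 1) → ∀ k ∈ F n,
      g * k * h ∈ F (n + 1) := by
    intro g h n hg hh k hk
    rw [hFn (n + 1) (by omega)]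
    left
    exact ⟨g, hg, k, by simpa using hk, h, hh, rfl⟩
  -- cover
  have hcov : ∀ k : Γ, ∃ n, k ∈ F n := by
    intro k
    obtain ⟨n, hn⟩ := hEcover k
    have := hprod k 1 n (hEmono n hn) (hone _) 1 (h1F n)
    exact ⟨n + 1, by simpa using this⟩
  -- an opaque "level" function a with the properties we need
  obtain ⟨a, hcform, hmemF, hnotF⟩ :
      ∃ a : Γ → ℕ, (∀ k, c k = fun s => (a k : ℝ) * ζ k s) ∧
        (∀ k, k ∈ F (a k + 1)) ∧ (∀ k, 1 ≤ a k → k ∉ F (a k)) := by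
    refine ⟨fun k => Nat.find (hcov k) - 1, ?_, ?_, ?_⟩
    · intro k
      by_cases h1 : Nat.find (hcov k) ≤ 1
      · have hk1 : k ∈ F 1 := hFmono h1 (Nat.find_spec (hcov k))
        have h0 : Nat.find (hcov k) - 1 = 0 := by omega
        rw [hc0 k hk1]
        funext s
        simp [h0]
      · have hn : 1 ≤ Nat.find (hcov k) - 1 := by omega
        have hmem : k ∈ F (Nat.find (hcov k) - 1 + 1) \ F (Nat.find (hcov k) - 1) :=
          ⟨by rw [Nat.sub_add_cancel (by omega)]; exact Nat.find_spec (hcov k),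
            Nat.find_min (hcov k) (by omega)⟩
        exact hcn _ hn k hmem
    · intro k
      show k ∈ F (Nat.find (hcov k) - 1 + 1)
      exact hFmono (by omega) (Nat.find_spec (hcov k))
    · intro k hk
      have hk' : 1 ≤ Nat.find (hcov k) - 1 := hk
      show k ∉ F (Nat.find (hcov k) - 1)
      exact Nat.find_min (hcov k) (by omega)
  -- if k ∉ F n and g, h ∈ E n then the cocycle defect of ζ is ≤ 1/n
  have hS4 : ∀ (g h : Γ) (n : ℕ), 1 ≤ n → g ∈ E n → h ∈ E n → ∀ k : Γ, k ∉ F n →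
      Real.sqrt (∑' s, (ζ (g * k * h) s - ζ k (g⁻¹ * s)) ^ 2) ≤ 1 / (n : ℝ) := by
    intro g h n hn hg hh k hk
    by_contra hlt
    push_neg at hlt
    apply hk
    rw [hFn n hn]
    right
    simp only [Set.mem_iUnion]
    exact ⟨g, hg, h, hh, hlt⟩
  -- main argument
  intro g h m hm hg hh k
  -- the key level comparison
  have key : ∀ (g h k : Γ), g ∈ E m → h ∈ E m → a (g * k * h) ≤ max (a k + 1) (m - 1) := by
    intro g h k hg hh
    rcases Nat.eq_zero_or_pos (a (g * k * h)) with h0 | h1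
    · omega
    · by_contra hcon
      push_neg at hcon
      have h2 : g * k * h ∈ F (max (a k + 1) (m - 1) + 1) := by
        apply hprod g h _ (hEmono' (by omega) hg) (hEmono' (by omega) hh)
        exact hFmono (le_max_left _ _) (hmemF k)
      have h3 : g * k * h ∈ F (a (g * k * h)) := hFmono (by omega) h2
      exact hnotF _ h1 h3
  have hbkey : a (g * k * h) ≤ max (a k + 1) (m - 1) := key g h k hg hh
  have hakey : a k ≤ max (a (g * k * h) + 1) (m - 1) := by
    have := key g⁻¹ h⁻¹ (g * k * h) (hEsym m g hg) (hEsym m h hh)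
    have heq : g⁻¹ * (g * k * h) * h⁻¹ = k := by group
    rwa [heq] at this
  -- set up ℓ² elements
  have hu : Summable (fun s => (ζ (g * k * h) s) ^ 2) := summable_of_tsum_sq (hζ _)
  have hw : Summable (fun s => (ζ k (g⁻¹ * s)) ^ 2) :=
    ((Equiv.mulLeft g⁻¹).summable_iff (f := fun s => (ζ k s) ^ 2)).2
      (summable_of_tsum_sq (hζ k))
  set U : lp (fun _ : Γ => ℝ) 2 := ⟨fun s => ζ (g * k * h) s, memℓp_of_summable_sq hu⟩
    with hU_def
  set W : lp (fun _ : Γ => ℝ) 2 := ⟨fun s => ζ k (g⁻¹ * s), memℓp_of_summable_sq hw⟩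
    with hW_def
  have hUcoe : ∀ s, U s = ζ (g * k * h) s := fun s => rfl
  have hWcoe : ∀ s, W s = ζ k (g⁻¹ * s) := fun s => rfl
  have hUnorm : ‖U‖ = 1 := by
    rw [← sqrt_tsum_sq_eq_norm]
    rw [show ∑' s, (U s) ^ 2 = ∑' s, (ζ (g * k * h) s) ^ 2 from
      tsum_congr fun s => by rw [hUcoe]]
    rw [hζ (g * k * h)]
    exact Real.sqrt_one
  have hWnorm : ‖W‖ = 1 := by
    rw [← sqrt_tsum_sq_eq_norm]
    rw [show ∑' s, (W s) ^ 2 = ∑' s, (ζ k (g⁻¹ * s)) ^ 2 from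
      tsum_congr fun s => by rw [hWcoe]]
    have hre : ∑' s, (ζ k (g⁻¹ * s)) ^ 2 = ∑' s, (ζ k s) ^ 2 := by
      rw [← (Equiv.mulLeft g⁻¹).tsum_eq (fun s => (ζ k s) ^ 2)]
      exact tsum_congr fun s => by rw [show (Equiv.mulLeft g⁻¹) s = g⁻¹ * s from rfl]
    rw [hre, hζ k]
    exact Real.sqrt_one
  have hUWcoe : ∀ s, (U - W) s = ζ (g * k * h) s - ζ k (g⁻¹ * s) := by
    intro s
    rw [lp.coeFn_sub, Pi.sub_apply, hUcoe, hWcoe]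
  have hA0 : (0 : ℝ) ≤ (a k : ℝ) := Nat.cast_nonneg _
  have hB0 : (0 : ℝ) ≤ (a (g * k * h) : ℝ) := Nat.cast_nonneg _
  have hTarget : Real.sqrt (∑' s, (c (g * k * h) s - c k (g⁻¹ * s)) ^ 2)
      = ‖(a (g * k * h) : ℝ) • U - (a k : ℝ) • W‖ := by
    rw [← sqrt_tsum_sq_eq_norm]
    congr 1
    apply tsum_congr
    intro s
    have h1 : c (g * k * h) s = (a (g * k * h) : ℝ) * ζ (g * k * h) s := by
      rw [hcform (g * k * h)]
    have h2 : c k (g⁻¹ * s) = (a k : ℝ) * ζ k (g⁻¹ * s) := by rw [hcform k]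
    have h3 : ((a (g * k * h) : ℝ) • U - (a k : ℝ) • W) s
        = (a (g * k * h) : ℝ) * ζ (g * k * h) s - (a k : ℝ) * ζ k (g⁻¹ * s) := by
      rw [lp.coeFn_sub, Pi.sub_apply, lp.coeFn_smul, lp.coeFn_smul,
        Pi.smul_apply, Pi.smul_apply, hUcoe, hWcoe, smul_eq_mul, smul_eq_mul]
    rw [h1, h2, h3]
  rw [hTarget]
  have hm' : (1 : ℝ) ≤ (m : ℝ) := by exact_mod_cast hm
  -- case split
  rcases le_or_gt m (a k) with hcase1 | hcase1
  · -- a k ≥ m : use k ∉ F (a k)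
    have h1a : 1 ≤ a k := le_trans hm hcase1
    have hA1 : (1 : ℝ) ≤ (a k : ℝ) := by exact_mod_cast h1a
    have hUW : ‖U - W‖ ≤ 1 / (a k : ℝ) := by
      rw [← sqrt_tsum_sq_eq_norm]
      rw [show ∑' s, ((U - W) s) ^ 2
          = ∑' s, (ζ (g * k * h) s - ζ k (g⁻¹ * s)) ^ 2 from
        tsum_congr fun s => by rw [hUWcoe]]
      exact hS4 g h (a k) h1a (hEmono' hcase1 hg) (hEmono' hcase1 hh) k (hnotF k h1a)
    have hb1 : a (g * k * h) ≤ a k + 1 := by omega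
    have ha1 : a k ≤ a (g * k * h) + 1 := by omega
    have hdecomp : (a (g * k * h) : ℝ) • U - (a k : ℝ) • W
        = (a k : ℝ) • (U - W) + ((a (g * k * h) : ℝ) - (a k : ℝ)) • U := by
      rw [smul_sub, sub_smul]; abel
    rw [hdecomp]
    have hBA : |(a (g * k * h) : ℝ) - (a k : ℝ)| ≤ 1 := by
      rw [abs_sub_le_iff]
      have e1 : (a (g * k * h) : ℝ) ≤ (a k : ℝ) + 1 := by exact_mod_cast hb1
      have e2 : (a k : ℝ) ≤ (a (g * k * h) : ℝ) + 1 := by exact_mod_cast ha1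
      constructor <;> linarith
    calc ‖(a k : ℝ) • (U - W) + ((a (g * k * h) : ℝ) - (a k : ℝ)) • U‖
        ≤ ‖(a k : ℝ) • (U - W)‖ + ‖((a (g * k * h) : ℝ) - (a k : ℝ)) • U‖ :=
          norm_add_le _ _
      _ = |(a k : ℝ)| * ‖U - W‖ + |(a (g * k * h) : ℝ) - (a k : ℝ)| * ‖U‖ := by
          rw [norm_smul, norm_smul, Real.norm_eq_abs, Real.norm_eq_abs]
      _ ≤ (a k : ℝ) * (1 / (a k : ℝ)) + 1 * 1 := by
          apply add_le_add
          · rw [abs_of_nonneg hA0]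
            exact mul_le_mul_of_nonneg_left hUW hA0
          · rw [hUnorm, mul_one]
            linarith
      _ ≤ 2 * (m : ℝ) := by
          rw [mul_one_div_cancel (by linarith : (a k : ℝ) ≠ 0)]
          linarith
  · rcases le_or_gt m (a (g * k * h)) with hcase2 | hcase2
    · -- a (g k h) ≥ m and a k < m : use g k h ∉ F (a (g k h))
      have h1b : 1 ≤ a (g * k * h) := le_trans hm hcase2
      have hB1 : (1 : ℝ) ≤ (a (g * k * h) : ℝ) := by exact_mod_cast h1b
      have hUW : ‖U - W‖ ≤ 1 / (a (g * k * h) : ℝ) := by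
        rw [← sqrt_tsum_sq_eq_norm]
        have hb := hS4 g⁻¹ h⁻¹ (a (g * k * h)) h1b
          (hEmono' hcase2 (hEsym m g hg)) (hEmono' hcase2 (hEsym m h hh))
          (g * k * h) (hnotF _ h1b)
        have heq1 : g⁻¹ * (g * k * h) * h⁻¹ = k := by group
        rw [heq1] at hb
        have hre : ∑' s, ((U - W) s) ^ 2
            = ∑' s, (ζ k s - ζ (g * k * h) (g⁻¹⁻¹ * s)) ^ 2 := by
          rw [← (Equiv.mulLeft g).tsum_eq (fun s => ((U - W) s) ^ 2)]
          apply tsum_congr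
          intro s
          rw [show (Equiv.mulLeft g) s = g * s from rfl, hUWcoe]
          rw [inv_inv, inv_mul_cancel_left]
          ring
        rw [hre]
        exact hb
      have hb1 : a (g * k * h) ≤ a k + 1 := by omega
      have hdecomp : (a (g * k * h) : ℝ) • U - (a k : ℝ) • W
          = (a (g * k * h) : ℝ) • (U - W)
            + ((a (g * k * h) : ℝ) - (a k : ℝ)) • W := by
        rw [smul_sub, sub_smul]; abel
      rw [hdecomp]
      have hBA : |(a (g * k * h) : ℝ) - (a k : ℝ)| ≤ 1 := by
        rw [abs_sub_le_iff]
        have e1 : (a (g * k * h) : ℝ) ≤ (a k : ℝ) + 1 := by exact_mod_cast hb1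
        have e2 : (a k : ℝ) ≤ (a (g * k * h) : ℝ) := by
          exact_mod_cast le_of_lt (lt_of_lt_of_le hcase1 hcase2)
        constructor <;> linarith
      calc ‖(a (g * k * h) : ℝ) • (U - W) + ((a (g * k * h) : ℝ) - (a k : ℝ)) • W‖
          ≤ ‖(a (g * k * h) : ℝ) • (U - W)‖
            + ‖((a (g * k * h) : ℝ) - (a k : ℝ)) • W‖ := norm_add_le _ _
        _ = |(a (g * k * h) : ℝ)| * ‖U - W‖
            + |(a (g * k * h) : ℝ) - (a k : ℝ)| * ‖W‖ := by
            rw [norm_smul, norm_smul, Real.norm_eq_abs, Real.norm_eq_abs]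
        _ ≤ (a (g * k * h) : ℝ) * (1 / (a (g * k * h) : ℝ)) + 1 * 1 := by
            apply add_le_add
            · rw [abs_of_nonneg hB0]
              exact mul_le_mul_of_nonneg_left hUW hB0
            · rw [hWnorm, mul_one]
              linarith
        _ ≤ 2 * (m : ℝ) := by
            rw [mul_one_div_cancel (by linarith : (a (g * k * h) : ℝ) ≠ 0)]
            linarith
    · -- both levels below m
      have hAm : (a k : ℝ) ≤ (m : ℝ) - 1 := by
        have h2 : a k + 1 ≤ m := hcase1
        have : ((a k : ℕ) : ℝ) + 1 ≤ (m : ℝ) := by exact_mod_cast h2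
        linarith
      have hBm : (a (g * k * h) : ℝ) ≤ (m : ℝ) - 1 := by
        have h2 : a (g * k * h) + 1 ≤ m := hcase2
        have : ((a (g * k * h) : ℕ) : ℝ) + 1 ≤ (m : ℝ) := by exact_mod_cast h2
        linarith
      calc ‖(a (g * k * h) : ℝ) • U - (a k : ℝ) • W‖
          ≤ ‖(a (g * k * h) : ℝ) • U‖ + ‖(a k : ℝ) • W‖ := norm_sub_le _ _
        _ = |(a (g * k * h) : ℝ)| * ‖U‖ + |(a k : ℝ)| * ‖W‖ := by
            rw [norm_smul, norm_smul, Real.norm_eq_abs, Real.norm_eq_abs]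
        _ = (a (g * k * h) : ℝ) + (a k : ℝ) := by
            rw [hUnorm, hWnorm, abs_of_nonneg hB0, abs_of_nonneg hA0]
            ring
        _ ≤ 2 * (m : ℝ) := by linarith
end
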